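/- (Reachability Lemma) Let (G_α)_{α∈addr(t)} be a concrete evaluation of a tree t ∈ T_Σ into a graph G, with G_α = (V_α, E_α, lab_α, port_α) for each α. Then for every address α ∈ addr(t), G_α equals G↓port_α, the subgraph of G induced by the set of nodes reachable in G via directed paths from the nodes of port_α, with port sequence port_α. -/

import Mathlib

/-!
Call a port graph rooted if its edges join its own nodes and every node is reachable inside it
from a port. Going up the tree, every `G_α` is rooted: a union of rooted graphs is rooted, and an
extension keeps the old nodes reachable because, by (R1) and (R2), each dock node that is not a
port is the target of an edge leaving a port. Going down the tree, `G_α` contains every edge of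
`G` that leaves one of its nodes: an extension adds only edges leaving fresh nodes (R1), and the
two sides of a union are disjoint. A rooted subgraph of `G` closed under outgoing edges is exactly
`G↓port`.
-/

structure PortGraph (ν Ld Lb : Type) where
  V : Set ν
  E : Set (ν × Lb × ν)
  lab : ν → Ld
  port : List ν

def PortGraph.IsEmptyGraph {ν Ld Lb : Type} (G : PortGraph ν Ld Lb) : Prop :=
  G.V = ∅ ∧ G.E = ∅ ∧ G.port = []

def CloneWitness {ν Ld Lb : Type} (G : PortGraph ν Ld Lb) (C : Set ν) (Cv : ν → Set ν)
    (G' : PortGraph ν Ld Lb) : Prop :=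
  (∀ v, v ∈ G.V → v ∉ C → Cv v = {v}) ∧
  (∀ u v, u ∈ G.V → v ∈ G.V → u ≠ v → Disjoint (Cv u) (Cv v)) ∧
  G'.V = (⋃ v ∈ G.V, Cv v) ∧
  G'.E = {e | ∃ u ℓ w, (u, ℓ, w) ∈ G.E ∧ e.1 ∈ Cv u ∧ e.2.1 = ℓ ∧ e.2.2 ∈ Cv w} ∧
  (∀ v, v ∈ G.V → ∀ v' ∈ Cv v, G'.lab v' = G.lab v) ∧
  G'.port = G.port

def Clone {ν Ld Lb : Type} (G : PortGraph ν Ld Lb) (C : Set ν) : Set (PortGraph ν Ld Lb) :=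
  {G' | ∃ Cv, CloneWitness G C Cv G'}

structure ExpOp (ν Ld Lb : Type) where
  V : Set ν
  E : Set (ν × Lb × ν)
  lab : ν → Ld
  port : List ν
  dock : List ν
  C : Set ν
  E_sub : ∀ e ∈ E, e.1 ∈ V ∧ e.2.2 ∈ V
  port_nodup : port.Nodup
  dock_nodup : dock.Nodup
  port_sub : ∀ v ∈ port, v ∈ V
  dock_sub : ∀ v ∈ dock, v ∈ V
  C_sub : C ⊆ V \ ({v | v ∈ port} ∪ {v | v ∈ dock})

namespace ExpOp
variable {ν Ld Lb : Type}

def und (Φ : ExpOp ν Ld Lb) : PortGraph ν Ld Lb := ⟨Φ.V, Φ.E, Φ.lab, Φ.port⟩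

def NEW (Φ : ExpOp ν Ld Lb) : Set ν := {v | v ∈ Φ.port} \ {v | v ∈ Φ.dock}

def CONT (Φ : ExpOp ν Ld Lb) : Set ν := Φ.V \ ({v | v ∈ Φ.port} ∪ {v | v ∈ Φ.dock})

/-- (R1): every edge source lies in NEW. -/
def R1 (Φ : ExpOp ν Ld Lb) : Prop := ∀ e ∈ Φ.E, e.1 ∈ Φ.NEW

/-- (R2): every dock node that is not a port is the target of some edge. -/
def R2 (Φ : ExpOp ν Ld Lb) : Prop := ∀ v ∈ Φ.dock, v ∉ Φ.port → ∃ e ∈ Φ.E, e.2.2 = v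

/-- (R3): no isolated context nodes. -/
def R3 (Φ : ExpOp ν Ld Lb) : Prop := ∀ v ∈ Φ.V, v ∉ Φ.port → ∃ e ∈ Φ.E, e.2.2 = v

end ExpOp

def Apply {ν Ld Lb : Type} (Φ : ExpOp ν Ld Lb) (G H : PortGraph ν Ld Lb) : Prop :=
  G.port.length = Φ.dock.length ∧
  ∃ (Cv : ν → Set ν) (G'' : PortGraph ν Ld Lb) (μ : ν → ν),
    CloneWitness Φ.und Φ.C Cv G'' ∧
    Set.InjOn μ G''.V ∧
    (∀ v ∈ Φ.NEW, μ v ∉ G.V) ∧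
    Φ.dock.map μ = G.port ∧
    (∀ v ∈ Φ.CONT, ∀ v' ∈ Cv v, μ v' ∈ G.V ∧ μ v' ∉ {x | x ∈ G.port} ∧
      G.lab (μ v') = Φ.lab v) ∧
    H.V = G.V ∪ μ '' G''.V ∧
    H.E = G.E ∪ {e | ∃ e' ∈ G''.E, e = (μ e'.1, e'.2.1, μ e'.2.2)} ∧
    (∀ v ∈ G.V, H.lab v = G.lab v) ∧
    (∀ v' ∈ G''.V, μ v' ∉ G.V → H.lab (μ v') = G''.lab v') ∧
    H.port = G''.port.map μ

def UnionOf {ν Ld Lb : Type} (G₁ G₂ H : PortGraph ν Ld Lb) : Prop :=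
  Disjoint G₁.V G₂.V ∧
  H.V = G₁.V ∪ G₂.V ∧
  H.E = G₁.E ∪ G₂.E ∧
  (∀ v ∈ G₁.V, H.lab v = G₁.lab v) ∧
  (∀ v ∈ G₂.V, H.lab v = G₂.lab v) ∧
  H.port = G₁.port ++ G₂.port

def Subgraph {ν Ld Lb : Type} (G' G : PortGraph ν Ld Lb) : Prop :=
  G'.V ⊆ G.V ∧ G'.E ⊆ G.E ∧ (∀ v ∈ G'.V, G'.lab v = G.lab v)

def PortGraph.step {ν Ld Lb : Type} (G : PortGraph ν Ld Lb) (u v : ν) : Prop :=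
  ∃ ℓ, (u, ℓ, v) ∈ G.E

/-- Nodes reachable in `G` by directed paths from the nodes occurring in `p`. -/
def PortGraph.reachSet {ν Ld Lb : Type} (G : PortGraph ν Ld Lb) (p : List ν) : Set ν :=
  {v | ∃ u ∈ p, Relation.ReflTransGen G.step u v}

/-- `G↓p`: the subgraph of `G` induced by the nodes reachable from `p`, with port sequence `p`. -/
def PortGraph.restrictReach {ν Ld Lb : Type} (G : PortGraph ν Ld Lb) (p : List ν) : PortGraph ν Ld Lb :=
  ⟨G.reachSet p, {e | e ∈ G.E ∧ e.1 ∈ G.reachSet p ∧ e.2.2 ∈ G.reachSet p}, G.lab, p⟩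

inductive OpTree (ν Ld Lb : Type) : Type where
  | phi : OpTree ν Ld Lb
  | ext : ExpOp ν Ld Lb → OpTree ν Ld Lb → OpTree ν Ld Lb
  | union : OpTree ν Ld Lb → OpTree ν Ld Lb → OpTree ν Ld Lb

namespace OpTree
variable {ν Ld Lb : Type}

def subtree : OpTree ν Ld Lb → List ℕ → Option (OpTree ν Ld Lb)
  | t, [] => some t
  | .ext _ t, 1 :: α => t.subtree α
  | .union t₁ _, 1 :: α => t₁.subtree α
  | .union _ t₂, 2 :: α => t₂.subtree α
  | _, _ => none

def Addr (t : OpTree ν Ld Lb) (α : List ℕ) : Prop := (t.subtree α).isSome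

def ops : OpTree ν Ld Lb → Set (ExpOp ν Ld Lb)
  | .phi => ∅
  | .ext Φ t => insert Φ t.ops
  | .union t₁ t₂ => t₁.ops ∪ t₂.ops

end OpTree

/-- A concrete evaluation of the tree `t` into the graph `G`: a family of subgraphs of `G`
(indexed by Gorn addresses, with no renaming of nodes) with `ev [] = G`, respecting the
operations labelling `t`. -/
def ConcreteEval {ν Ld Lb : Type} (t : OpTree ν Ld Lb) (G : PortGraph ν Ld Lb)
    (ev : List ℕ → PortGraph ν Ld Lb) : Prop :=
  ev [] = G ∧
  ∀ α, t.Addr α →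
    Subgraph (ev α) G ∧
    (t.subtree α = some .phi → (ev α).IsEmptyGraph) ∧
    (∀ Φ t', t.subtree α = some (.ext Φ t') → Apply Φ (ev (α ++ [1])) (ev α)) ∧
    (∀ t₁ t₂, t.subtree α = some (.union t₁ t₂) →
      UnionOf (ev (α ++ [1])) (ev (α ++ [2])) (ev α))

variable {ν Ld Lb : Type}

namespace PortGraph

lemma mem_reachSet_of_mem {G : PortGraph ν Ld Lb} {p : List ν} {v : ν} (hv : v ∈ p) :
    v ∈ G.reachSet p :=
  ⟨v, hv, .refl⟩

lemma mem_reachSet_of_edge {G : PortGraph ν Ld Lb} {p : List ν} {u v : ν} {ℓ : Lb}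
    (hu : u ∈ G.reachSet p) (he : (u, ℓ, v) ∈ G.E) : v ∈ G.reachSet p :=
  let ⟨w, hw, hwu⟩ := hu
  ⟨w, hw, hwu.tail ⟨ℓ, he⟩⟩

lemma reachSet_mono {G H : PortGraph ν Ld Lb} {p q : List ν} (hE : G.E ⊆ H.E)
    (hpq : ∀ v ∈ p, v ∈ H.reachSet q) : G.reachSet p ⊆ H.reachSet q := by
  rintro v ⟨u, hu, huv⟩
  obtain ⟨w, hw, hwu⟩ := hpq u hu
  exact ⟨w, hw, hwu.trans (huv.lift id fun _ _ ⟨ℓ, he⟩ => ⟨ℓ, hE he⟩)⟩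

structure IsRooted (H : PortGraph ν Ld Lb) : Prop where
  fst_mem : ∀ e ∈ H.E, e.1 ∈ H.V
  snd_mem : ∀ e ∈ H.E, e.2.2 ∈ H.V
  port_mem : ∀ v ∈ H.port, v ∈ H.V
  mem_reachSet : ∀ v ∈ H.V, v ∈ H.reachSet H.port

lemma IsEmptyGraph.isRooted {H : PortGraph ν Ld Lb} (hH : H.IsEmptyGraph) : H.IsRooted := by
  obtain ⟨hV, hE, hp⟩ := hH
  constructor <;> simp [hV, hE, hp]

lemma IsRooted.reachSet_subset {H G : PortGraph ν Ld Lb} (hH : H.IsRooted)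
    (hclosed : ∀ e ∈ G.E, e.1 ∈ H.V → e ∈ H.E) : G.reachSet H.port ⊆ H.V := by
  rintro v ⟨u, hu, huv⟩
  induction huv with
  | refl => exact hH.port_mem u hu
  | tail _ hstep ih =>
    obtain ⟨ℓ, he⟩ := hstep
    exact hH.snd_mem _ (hclosed _ he ih)

lemma IsRooted.eq_restrictReach {H G : PortGraph ν Ld Lb} (hH : H.IsRooted)
    (hsub : Subgraph H G) (hclosed : ∀ e ∈ G.E, e.1 ∈ H.V → e ∈ H.E) :
    H.V = G.reachSet H.port ∧
      H.E = {e | e ∈ G.E ∧ e.1 ∈ G.reachSet H.port ∧ e.2.2 ∈ G.reachSet H.port} := by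
  have hV : H.V = G.reachSet H.port :=
    Set.Subset.antisymm (fun v hv => reachSet_mono hsub.2.1 (fun u hu => mem_reachSet_of_mem hu)
      (hH.mem_reachSet v hv)) (hH.reachSet_subset hclosed)
  refine ⟨hV, Set.ext fun e =>
    ⟨fun he => ?_, fun ⟨he, h1, _⟩ => hclosed e he (hV ▸ h1)⟩⟩
  exact ⟨hsub.2.1 he, hV ▸ hH.fst_mem e he, hV ▸ hH.snd_mem e he⟩

end PortGraph

open PortGraph

namespace UnionOf

variable {G₁ G₂ H : PortGraph ν Ld Lb}

lemma isRooted (hU : UnionOf G₁ G₂ H) (h₁ : G₁.IsRooted) (h₂ : G₂.IsRooted) :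
    H.IsRooted := by
  obtain ⟨-, hV, hE, -, -, hport⟩ := hU
  have hreach₁ : G₁.reachSet G₁.port ⊆ H.reachSet H.port :=
    reachSet_mono (hE ▸ Set.subset_union_left) fun v hv =>
      mem_reachSet_of_mem (hport ▸ List.mem_append_left _ hv)
  have hreach₂ : G₂.reachSet G₂.port ⊆ H.reachSet H.port :=
    reachSet_mono (hE ▸ Set.subset_union_right) fun v hv =>
      mem_reachSet_of_mem (hport ▸ List.mem_append_right _ hv)
  refine ⟨?_, ?_, ?_, ?_⟩
  · rw [hE, hV]
    rintro e (he | he)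
    exacts [.inl (h₁.fst_mem e he), .inr (h₂.fst_mem e he)]
  · rw [hE, hV]
    rintro e (he | he)
    exacts [.inl (h₁.snd_mem e he), .inr (h₂.snd_mem e he)]
  · rw [hport, hV]
    intro v hv
    rcases List.mem_append.1 hv with hv | hv
    exacts [.inl (h₁.port_mem v hv), .inr (h₂.port_mem v hv)]
  · rw [hV]
    rintro v (hv | hv)
    exacts [hreach₁ (h₁.mem_reachSet v hv), hreach₂ (h₂.mem_reachSet v hv)]

lemma mem_left_of_fst_mem (hU : UnionOf G₁ G₂ H) (h₂ : ∀ e ∈ G₂.E, e.1 ∈ G₂.V)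
    {e : ν × Lb × ν} (he : e ∈ H.E) (hv : e.1 ∈ G₁.V) : e ∈ G₁.E := by
  rw [hU.2.2.1] at he
  exact he.resolve_right fun he₂ => Set.disjoint_left.1 hU.1 hv (h₂ e he₂)

lemma mem_right_of_fst_mem (hU : UnionOf G₁ G₂ H) (h₁ : ∀ e ∈ G₁.E, e.1 ∈ G₁.V)
    {e : ν × Lb × ν} (he : e ∈ H.E) (hv : e.1 ∈ G₂.V) : e ∈ G₂.E := by
  rw [hU.2.2.1] at he
  exact he.resolve_left fun he₁ => Set.disjoint_left.1 hU.1 (h₁ e he₁) hv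

end UnionOf

namespace CloneWitness

variable {K G' : PortGraph ν Ld Lb} {C : Set ν} {Cv : ν → Set ν}

lemma mem_V (hw : CloneWitness K C Cv G') {v : ν} (hv : v ∈ K.V) (hvC : v ∉ C) : v ∈ G'.V :=
  hw.2.2.1 ▸ Set.mem_biUnion hv (by rw [hw.1 v hv hvC]; rfl)

lemma mem_E (hw : CloneWitness K C Cv G') {u w : ν} {ℓ : Lb} (he : (u, ℓ, w) ∈ K.E)
    (hu : u ∈ K.V) (huC : u ∉ C) (hw' : w ∈ K.V) (hwC : w ∉ C) : (u, ℓ, w) ∈ G'.E :=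
  hw.2.2.2.1 ▸ ⟨u, ℓ, w, he, by rw [hw.1 u hu huC]; rfl, rfl, by rw [hw.1 w hw' hwC]; rfl⟩

lemma fst_mem (hw : CloneWitness K C Cv G') (hK : ∀ e ∈ K.E, e.1 ∈ K.V) :
    ∀ e ∈ G'.E, e.1 ∈ G'.V := by
  rw [hw.2.2.2.1, hw.2.2.1]
  rintro e ⟨u, ℓ, w, he, hu, -⟩
  exact Set.mem_biUnion (hK _ he) hu

lemma snd_mem (hw : CloneWitness K C Cv G') (hK : ∀ e ∈ K.E, e.2.2 ∈ K.V) :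
    ∀ e ∈ G'.E, e.2.2 ∈ G'.V := by
  rw [hw.2.2.2.1, hw.2.2.1]
  rintro e ⟨u, ℓ, w, he, -, -, hw⟩
  exact Set.mem_biUnion (hK _ he) hw

end CloneWitness

namespace ExpOp

variable (Φ : ExpOp ν Ld Lb)

lemma not_mem_C_of_mem_port {v : ν} (hv : v ∈ Φ.port) : v ∉ Φ.C :=
  fun hc => (Φ.C_sub hc).2 (.inl hv)

lemma not_mem_C_of_mem_dock {v : ν} (hv : v ∈ Φ.dock) : v ∉ Φ.C :=
  fun hc => (Φ.C_sub hc).2 (.inr hv)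

end ExpOp

namespace Apply

variable {Φ : ExpOp ν Ld Lb} {G H : PortGraph ν Ld Lb}

lemma subset_V (happ : Apply Φ G H) : G.V ⊆ H.V := by
  obtain ⟨_, _, _, _, _, _, _, _, _, hV, -⟩ := happ
  exact hV ▸ Set.subset_union_left

lemma mem_of_fst_mem (hR1 : Φ.R1) (happ : Apply Φ G H) {e : ν × Lb × ν} (he : e ∈ H.E)
    (hv : e.1 ∈ G.V) : e ∈ G.E := by
  obtain ⟨-, Cv, G'', μ, ⟨hC, -, -, hG''E, -, -⟩, -, hnew, -, -, -, hE, -⟩ := happ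
  rw [hE] at he
  refine he.resolve_right ?_
  rintro ⟨e', he', rfl⟩
  rw [hG''E] at he'
  obtain ⟨u, ℓ, w, huw, hu, -⟩ := he'
  have huNEW : u ∈ Φ.NEW := hR1 _ huw
  rw [hC u (Φ.E_sub _ huw).1 (Φ.not_mem_C_of_mem_port huNEW.1)] at hu
  exact hnew u huNEW (hu ▸ hv)

lemma isRooted (hR1 : Φ.R1) (hR2 : Φ.R2) (happ : Apply Φ G H) (hG : G.IsRooted) :
    H.IsRooted := by
  obtain ⟨-, Cv, G'', μ, hCW, -, -, hdock, hcont, hV, hE, -, -, hport⟩ := happ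
  have hport_mem : ∀ v ∈ Φ.port, μ v ∈ H.reachSet H.port := fun v hv =>
    mem_reachSet_of_mem (hport ▸ hCW.2.2.2.2.2 ▸ List.mem_map_of_mem hv)
  have hdock_mem : ∀ d ∈ Φ.dock, μ d ∈ H.reachSet H.port := by
    intro d hd
    by_cases hdp : d ∈ Φ.port
    · exact hport_mem d hdp
    obtain ⟨⟨a, ℓ, d'⟩, hE', hd' : d' = d⟩ := hR2 d hd hdp
    rw [← hd'] at hd ⊢
    have ha : a ∈ Φ.port := (hR1 _ hE').1
    have hedge : (a, ℓ, d') ∈ G''.E := hCW.mem_E hE' (Φ.port_sub a ha)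
      (Φ.not_mem_C_of_mem_port ha) (Φ.dock_sub d' hd) (Φ.not_mem_C_of_mem_dock hd)
    exact mem_reachSet_of_edge (hport_mem a ha)
      (hE ▸ Or.inr ⟨_, hedge, rfl⟩ : (μ a, ℓ, μ d') ∈ H.E)
  have hG_mem : ∀ v ∈ G.V, v ∈ H.reachSet H.port := fun v hv =>
    reachSet_mono (hE ▸ Set.subset_union_left) (fun u hu => by
      obtain ⟨d, hd, rfl⟩ := List.mem_map.1 (hdock ▸ hu)
      exact hdock_mem d hd) (hG.mem_reachSet v hv)
  refine ⟨?_, ?_, ?_, ?_⟩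
  · rw [hE, hV]
    rintro e (he | ⟨e', he', rfl⟩)
    exacts [.inl (hG.fst_mem e he),
      .inr ⟨_, hCW.fst_mem (fun e he => (Φ.E_sub e he).1) e' he', rfl⟩]
  · rw [hE, hV]
    rintro e (he | ⟨e', he', rfl⟩)
    exacts [.inl (hG.snd_mem e he),
      .inr ⟨_, hCW.snd_mem (fun e he => (Φ.E_sub e he).2) e' he', rfl⟩]
  · rw [hport, hCW.2.2.2.2.2, hV]
    intro v hv
    obtain ⟨p, hp, rfl⟩ := List.mem_map.1 hv
    exact .inr ⟨p, hCW.mem_V (Φ.port_sub p hp) (Φ.not_mem_C_of_mem_port hp), rfl⟩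
  · rw [hV]
    rintro v (hv | ⟨v', hv', rfl⟩)
    · exact hG_mem v hv
    obtain ⟨w, hw, hv'⟩ := Set.mem_iUnion₂.1 (hCW.2.2.1 ▸ hv')
    by_cases hwp : w ∈ Φ.port
    · rw [hCW.1 w hw (Φ.not_mem_C_of_mem_port hwp), Set.mem_singleton_iff.1 hv'] at *
      exact hport_mem w hwp
    by_cases hwd : w ∈ Φ.dock
    · rw [hCW.1 w hw (Φ.not_mem_C_of_mem_dock hwd), Set.mem_singleton_iff.1 hv'] at *
      exact hdock_mem w hwd
    exact hG_mem _ (hcont w ⟨hw, fun h => h.elim hwp hwd⟩ v' hv').1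

end Apply

namespace OpTree

lemma subtree_append (t : OpTree ν Ld Lb) (α β : List ℕ) :
    t.subtree (α ++ β) = (t.subtree α).bind (·.subtree β) := by
  induction α generalizing t with
  | nil => cases t <;> rfl
  | cons a α ih =>
    match t, a with
    | .phi, _ => cases ‹ℕ› <;> simp [subtree]
    | .ext Φ s, 0 => rfl
    | .ext Φ s, 1 => exact ih s
    | .ext Φ s, (n+2) => simp [subtree]
    | .union s₁ s₂, 0 => rfl
    | .union s₁ s₂, 1 => exact ih s₁
    | .union s₁ s₂, 2 => exact ih s₂
    | .union s₁ s₂, (n+3) => rfl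

lemma subtree_nil (t : OpTree ν Ld Lb) : t.subtree [] = some t := by
  cases t <;> rfl

variable {t s : OpTree ν Ld Lb} {α : List ℕ}

lemma subtree_ext_child {Φ : ExpOp ν Ld Lb} (h : t.subtree α = some (.ext Φ s)) :
    t.subtree (α ++ [1]) = some s := by
  rw [subtree_append, h]; simp [subtree, subtree_nil]

lemma subtree_union_left {s₂ : OpTree ν Ld Lb} (h : t.subtree α = some (.union s s₂)) :
    t.subtree (α ++ [1]) = some s := by
  rw [subtree_append, h]; simp [subtree, subtree_nil]

lemma subtree_union_right {s₁ : OpTree ν Ld Lb} (h : t.subtree α = some (.union s₁ s)) :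
    t.subtree (α ++ [2]) = some s := by
  rw [subtree_append, h]; simp [subtree, subtree_nil]

lemma addr_of_subtree (h : t.subtree α = some s) : t.Addr α := by
  simp [Addr, h]

lemma ops_subset_of_subtree (h : t.subtree α = some s) : s.ops ⊆ t.ops := by
  induction α generalizing t with
  | nil => cases t <;> cases h <;> rfl
  | cons a α ih =>
    match t, a, h with
    | .ext Φ s', 1, h => exact (ih h).trans (Set.subset_insert _ _)
    | .union s₁ s₂, 1, h => exact (ih h).trans Set.subset_union_left
    | .union s₁ s₂, 2, h => exact (ih h).trans Set.subset_union_right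
    | .phi, _, h => simp [subtree] at h
    | .ext Φ s', (n+2), h => simp [subtree] at h

end OpTree

open OpTree

namespace ConcreteEval

variable {t : OpTree ν Ld Lb} {G : PortGraph ν Ld Lb} {ev : List ℕ → PortGraph ν Ld Lb}
  {α : List ℕ}

lemma isRooted (hops : ∀ Φ ∈ t.ops, Φ.R1 ∧ Φ.R2) (h : ConcreteEval t G ev)
    {s : OpTree ν Ld Lb} (hs : t.subtree α = some s) : (ev α).IsRooted := by
  induction s generalizing α with
  | phi => exact ((h.2 α (addr_of_subtree hs)).2.1 hs).isRooted
  | ext Φ s ih =>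
    obtain ⟨hR1, hR2⟩ := hops Φ (ops_subset_of_subtree hs (Set.mem_insert _ _))
    exact ((h.2 α (addr_of_subtree hs)).2.2.1 Φ s hs).isRooted hR1 hR2
      (ih (subtree_ext_child hs))
  | union s₁ s₂ ih₁ ih₂ =>
    exact ((h.2 α (addr_of_subtree hs)).2.2.2 s₁ s₂ hs).isRooted
      (ih₁ (subtree_union_left hs)) (ih₂ (subtree_union_right hs))

lemma mem_of_fst_mem (hops : ∀ Φ ∈ t.ops, Φ.R1 ∧ Φ.R2) (h : ConcreteEval t G ev)
    (hα : t.Addr α) {e : ν × Lb × ν} (he : e ∈ G.E) (hv : e.1 ∈ (ev α).V) :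
    e ∈ (ev α).E := by
  induction α using List.reverseRecOn with
  | nil => exact h.1 ▸ he
  | append_singleton β i ih =>
    obtain ⟨s, hs⟩ := Option.isSome_iff_exists.1 hα
    obtain ⟨s₀, hβ, hi⟩ :=
      Option.bind_eq_some_iff.1 ((subtree_append t β [i]).symm.trans hs)
    have hβaddr := addr_of_subtree hβ
    match s₀, i, hi with
    | .ext Φ s', 1, _ =>
      have happ := (h.2 β hβaddr).2.2.1 Φ s' hβ
      have hR1 := (hops Φ (ops_subset_of_subtree hβ (Set.mem_insert _ _))).1
      exact happ.mem_of_fst_mem hR1 (ih hβaddr (happ.subset_V hv)) hv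
    | .union s₁ s₂, 1, _ =>
      have hU := (h.2 β hβaddr).2.2.2 s₁ s₂ hβ
      exact hU.mem_left_of_fst_mem (h.isRooted hops (subtree_union_right hβ)).fst_mem
        (ih hβaddr (hU.2.1 ▸ .inl hv)) hv
    | .union s₁ s₂, 2, _ =>
      have hU := (h.2 β hβaddr).2.2.2 s₁ s₂ hβ
      exact hU.mem_right_of_fst_mem (h.isRooted hops (subtree_union_left hβ)).fst_mem
        (ih hβaddr (hU.2.1 ▸ .inr hv)) hv
    | .phi, _, hi => simp [subtree] at hi
    | .ext Φ s', (n+2), hi => simp [subtree] at hi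

end ConcreteEval

/-- Reachability Lemma: in a concrete evaluation of `t` into `G`, every
`G_α` equals `G↓port_α`, the subgraph of `G` induced by the nodes reachable from `port_α`,
with port sequence `port_α`. -/
theorem reachability_lemma {ν Ld Lb : Type} (t : OpTree ν Ld Lb)
    (G : PortGraph ν Ld Lb) (ev : List ℕ → PortGraph ν Ld Lb)
    (hops : ∀ Φ ∈ t.ops, Φ.R1 ∧ Φ.R2)
    (h : ConcreteEval t G ev) :
    ∀ α, t.Addr α →
      (ev α).V = G.reachSet (ev α).port ∧
      (ev α).E = {e | e ∈ G.E ∧ e.1 ∈ G.reachSet (ev α).port ∧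
        e.2.2 ∈ G.reachSet (ev α).port} ∧
      (∀ v ∈ (ev α).V, (ev α).lab v = G.lab v) := by
  intro α hα
  obtain ⟨s, hs⟩ := Option.isSome_iff_exists.1 hα
  have hsub : Subgraph (ev α) G := (h.2 α hα).1
  obtain ⟨hV, hE⟩ := (h.isRooted hops hs).eq_restrictReach hsub
    fun e he hv => h.mem_of_fst_mem hops hα he hv
  exact ⟨hV, hE, hsub.2.2⟩
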